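/- Characterization of the service rate region when n ≥ k + i: a nonnegative vector λ = (λ_1,…,λ_k) belongs to S_i(n,k) if and only if for every subset A ⊆ [i], k·(Σ_{j∈A} λ_j + Σ_{j=i+1}^k λ_j) + Σ_{j∈[i]\A} λ_j ≤ n + |A|·(k−1). -/

import Mathlib

/-!
Necessity is weak LP duality. Give column `l` the weight `k` if it is the systematic column of an
object of `A` and `1` otherwise, and price object `j` at `k` if `j ∈ A` or `i ≤ j` and at `1`
otherwise. By the MDS property a recovery set of `j` is either the systematic column of `j` or has
at least `k` columns, none of them systematic for `j`; so every recovery set weighs at least the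
price of its object, and summing the capacity constraints against the weights gives the inequality.

Sufficiency: each object `j < i` is served at rate `min λ_j 1` by its systematic column. The
residual demands `d_j` have total `D`, and the spare capacities `u_l = min (1 - direct load) D`
satisfy `k * D ≤ ∑ u_l`: for `D ≥ 1` this is the inequality for `A = {j < i | 1 < λ_j}`, for `D < 1`
it follows from `n - i ≥ k`. A vector `0 ≤ u ≤ D` with `k * D ≤ ∑ u` dominates a nonnegative
combination of indicator vectors of `k`-sets of total weight `D` (the hypersimplex is the convex
hull of its `0/1` points). Every set used avoids the systematic columns of the objects with residual
demand, so it recovers each of them, and object `j` takes the share `d_j / D` of every set.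
-/

open Matrix

/-- `R ⊆ [n]` is a recovery set for object `j` under generator matrix `G`:
the standard basis vector `e_j` lies in the span of the columns of `G` indexed by `R`,
and minimally so. -/
def IsRecoverySet {F : Type*} [Field F] {k n : ℕ} (G : Matrix (Fin k) (Fin n) F)
    (j : Fin k) (R : Finset (Fin n)) : Prop :=
  (Pi.single j 1 : Fin k → F) ∈ Submodule.span F (Gᵀ '' (R : Set (Fin n))) ∧
    ∀ S : Finset (Fin n), S ⊂ R →
      (Pi.single j 1 : Fin k → F) ∉ Submodule.span F (Gᵀ '' (S : Set (Fin n)))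

/-- A valid allocation of request rates `lam` to recovery sets: nonnegative weights
`w j R` supported on recovery sets, summing to `lam j` for each object `j`, and
loading each server `l` by at most its unit capacity. -/
def IsValidAllocation {F : Type*} [Field F] {k n : ℕ} (G : Matrix (Fin k) (Fin n) F)
    (lam : Fin k → ℝ) (w : Fin k → Finset (Fin n) → ℝ) : Prop :=
  (∀ j R, 0 ≤ w j R) ∧
  (∀ j R, ¬ IsRecoverySet G j R → w j R = 0) ∧
  (∀ j, ∑ R : Finset (Fin n), w j R = lam j) ∧
  (∀ l : Fin n, ∑ j : Fin k, ∑ R ∈ Finset.univ.filter (fun R : Finset (Fin n) => l ∈ R),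
      w j R ≤ 1)

/-- The service rate region of `G`. -/
def ServiceRegion {F : Type*} [Field F] {k n : ℕ} (G : Matrix (Fin k) (Fin n) F) :
    Set (Fin k → ℝ) :=
  {lam | (∀ j, 0 ≤ lam j) ∧ ∃ w, IsValidAllocation G lam w}

/-- `Gmat M i` = the `k × n` matrix formed by the `i` leftmost (systematic) columns of `M`
followed by the `n - i` rightmost (parity) columns of `M`. -/
def Gmat {F : Type*} [Field F] {k n : ℕ} (M : Matrix (Fin k) (Fin (k + n)) F) (i : ℕ) :
    Matrix (Fin k) (Fin n) F :=
  Matrix.of fun r l =>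
    if (l : ℕ) < i then M r ⟨(l : ℕ), by have := l.isLt; omega⟩
    else M r ⟨k + (l : ℕ), by have := l.isLt; omega⟩

open Finset

theorem sum_eq_card_mul_of_forall_eq_zero_or_eq {ι : Type*} {s : Finset ι} {v : ι → ℝ} {D : ℝ}
    (h : ∀ l ∈ s, v l = 0 ∨ v l = D) : ∑ l ∈ s, v l = #{l ∈ s | v l = D} * D := by
  rw [← nsmul_eq_mul, ← sum_const, sum_filter]
  refine sum_congr rfl fun l hl => ?_
  rcases h l hl with h | h <;> split_ifs <;> grind

section KSubsetCombination

variable {ι : Type*} [DecidableEq ι] {D : ℝ} {v : ι → ℝ} {a b : ι}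

/-- Move mass from coordinate `b` to coordinate `a` until one of them reaches `0` or `D`. -/
def transfer (D : ℝ) (v : ι → ℝ) (a b : ι) : ι → ℝ :=
  v + min (D - v a) (v b) • (Pi.single a 1 - Pi.single b 1)

theorem transfer_apply (hab : a ≠ b) (l : ι) :
    transfer D v a b l =
      if l = a then v a + min (D - v a) (v b)
      else if l = b then v b - min (D - v a) (v b) else v l := by
  by_cases hla : l = a
  · subst hla; simp [transfer, hab]
  · by_cases hlb : l = b
    · subst hlb; simp [transfer, hla, sub_eq_add_neg]
    · simp [transfer, hla, hlb]

theorem transfer_mem_Icc (hab : a ≠ b) (hv : ∀ l, v l ∈ Set.Icc 0 D) (l : ι) :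
    transfer D v a b l ∈ Set.Icc 0 D := by
  obtain ⟨hva, hvaD⟩ := hv a
  obtain ⟨hvb, hvbD⟩ := hv b
  obtain ⟨hvl, hvlD⟩ := hv l
  have h₁ := min_le_left (D - v a) (v b)
  have h₂ := min_le_right (D - v a) (v b)
  have h₀ : 0 ≤ min (D - v a) (v b) := le_min (by linarith) hvb
  rw [transfer_apply hab]
  split_ifs <;> constructor <;> linarith

variable [Fintype ι]

theorem sum_transfer : ∑ l, transfer D v a b l = ∑ l, v l := by
  simp [transfer, sum_add_distrib, ← mul_sum, sum_sub_distrib]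

/-- `v` is `D` times a convex combination of indicator vectors of `k`-subsets of `ι`; the
weight of `R` is `W R`. -/
def IsKSubsetCombination (k : ℕ) (D : ℝ) (v : ι → ℝ) : Prop :=
  ∃ W : Finset ι → ℝ, (∀ R, 0 ≤ W R) ∧ (∀ R, W R ≠ 0 → #R = k) ∧ ∑ R, W R = D ∧
    ∀ l, ∑ R with l ∈ R, W R = v l

theorem convex_isKSubsetCombination (k : ℕ) (D : ℝ) :
    Convex ℝ {v : ι → ℝ | IsKSubsetCombination k D v} := by
  rintro x ⟨Wx, hWx0, hWxk, hWxD, hWxv⟩ y ⟨Wy, hWy0, hWyk, hWyD, hWyv⟩ c₁ c₂ hc₁ hc₂ hc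
  refine ⟨c₁ • Wx + c₂ • Wy, fun R => ?_, fun R hR => ?_, ?_, fun l => ?_⟩
  · have := hWx0 R; have := hWy0 R
    simp only [Pi.add_apply, Pi.smul_apply, smul_eq_mul]; positivity
  · by_cases hx : Wx R = 0
    · exact hWyk R fun hy => hR (by simp [hx, hy])
    · exact hWxk R hx
  · simp only [Pi.add_apply, Pi.smul_apply, smul_eq_mul, sum_add_distrib, ← mul_sum, hWxD, hWyD,
      ← add_mul, hc, one_mul]
  · simp only [Pi.add_apply, Pi.smul_apply, smul_eq_mul, sum_add_distrib, ← mul_sum, hWxv, hWyv]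

theorem isKSubsetCombination_of_forall_eq_zero_or_eq {k : ℕ} (hD : 0 ≤ D)
    (h : ∀ l, v l = 0 ∨ v l = D) (hsum : ∑ l, v l = k * D) : IsKSubsetCombination k D v := by
  rcases hD.eq_or_lt with rfl | hDpos
  · refine ⟨0, fun _ => le_rfl, fun R hR => absurd rfl hR, by simp, fun l => ?_⟩
    rcases h l with h | h <;> simp [h]
  set T : Finset ι := {l | v l = D}
  have hT : #T = k := by
    rw [sum_eq_card_mul_of_forall_eq_zero_or_eq fun l _ => h l] at hsum
    exact_mod_cast mul_right_cancel₀ hDpos.ne' hsum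
  refine ⟨fun R => if R = T then D else 0, fun R => ?_, fun R hR => ?_, by simp, fun l => ?_⟩
  · dsimp only; split_ifs <;> linarith
  · simp only [ne_eq, ite_eq_right_iff, Classical.not_imp] at hR
    rw [hR.1, hT]
  · rw [sum_ite_eq']
    rcases h l with h | h <;> simp [T, h, hDpos.ne]

noncomputable def fractionalSet (D : ℝ) (v : ι → ℝ) : Finset ι := {l | 0 < v l ∧ v l < D}

theorem exists_ne_mem_fractionalSet {k : ℕ} (hv : ∀ l, v l ∈ Set.Icc 0 D)
    (hsum : ∑ l, v l = k * D) (ha : a ∈ fractionalSet D v) : ∃ b ≠ a, b ∈ fractionalSet D v := by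
  by_contra! h
  simp only [fractionalSet, mem_filter, mem_univ, true_and] at ha h
  set m := #{l ∈ univ.erase a | v l = D}
  have hm : ∑ l, v l = v a + m * D := by
    rw [← add_sum_erase _ _ (mem_univ a), sum_eq_card_mul_of_forall_eq_zero_or_eq]
    intro l hl
    rcases (hv l).1.eq_or_lt with h0 | h0
    · exact .inl h0.symm
    · exact .inr ((hv l).2.antisymm (not_lt.mp fun hlt => h l (ne_of_mem_erase hl) ⟨h0, hlt⟩))
  -- `k * D = v a + m * D` with `0 < v a < D` would put `k` strictly between `m` and `m + 1`
  have hlt : (m : ℝ) < k := by nlinarith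
  have hgt : (k : ℝ) < m + 1 := by nlinarith
  norm_cast at hlt hgt
  omega

theorem fractionalSet_transfer_ssubset (hab : a ≠ b) (ha : a ∈ fractionalSet D v)
    (hb : b ∈ fractionalSet D v) : fractionalSet D (transfer D v a b) ⊂ fractionalSet D v := by
  simp only [fractionalSet, mem_filter, mem_univ, true_and] at ha hb
  rw [ssubset_iff_of_subset]
  · rcases le_total (D - v a) (v b) with h | h
    · refine ⟨a, by simpa [fractionalSet], ?_⟩
      simp [fractionalSet, transfer_apply hab, min_eq_left h]
    · refine ⟨b, by simpa [fractionalSet], ?_⟩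
      simp [fractionalSet, transfer_apply hab, min_eq_right h, hab.symm]
  · intro l hl
    simp only [fractionalSet, mem_filter, mem_univ, true_and, transfer_apply hab] at hl ⊢
    split_ifs at hl with hla hlb
    · exact hla ▸ ha
    · exact hlb ▸ hb
    · exact hl

theorem exists_eq_transfer_combination (hab : a ≠ b) (ha : a ∈ fractionalSet D v)
    (hb : b ∈ fractionalSet D v) :
    ∃ c₁ c₂ : ℝ, 0 ≤ c₁ ∧ 0 ≤ c₂ ∧ c₁ + c₂ = 1 ∧
      v = c₁ • transfer D v a b + c₂ • transfer D v b a := by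
  simp only [fractionalSet, mem_filter, mem_univ, true_and] at ha hb
  set ε₁ := min (D - v a) (v b)
  set ε₂ := min (D - v b) (v a)
  have hε₁ : 0 < ε₁ := lt_min (by linarith) hb.1
  have hε₂ : 0 < ε₂ := lt_min (by linarith) ha.1
  refine ⟨ε₂ / (ε₁ + ε₂), ε₁ / (ε₁ + ε₂), by positivity, by positivity, by field_simp; ring, ?_⟩
  ext l
  simp only [Pi.add_apply, Pi.smul_apply, smul_eq_mul, transfer_apply hab,
    transfer_apply hab.symm]
  split_ifs <;> field_simp <;> grind

theorem isKSubsetCombination_of_mem_Icc {k : ℕ} (hD : 0 ≤ D) (hv : ∀ l, v l ∈ Set.Icc 0 D)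
    (hsum : ∑ l, v l = k * D) : IsKSubsetCombination k D v := by
  induction hN : #(fractionalSet D v) using Nat.strong_induction_on generalizing v with
  | _ N ih =>
  obtain ⟨a, ha⟩ | hempty := (fractionalSet D v).eq_empty_or_nonempty.symm
  · obtain ⟨b, hba, hb⟩ := exists_ne_mem_fractionalSet hv hsum ha
    have htransfer (a b : ι) (hab : a ≠ b) (ha : a ∈ fractionalSet D v)
        (hb : b ∈ fractionalSet D v) : IsKSubsetCombination k D (transfer D v a b) :=
      ih _ (hN ▸ card_lt_card (fractionalSet_transfer_ssubset hab ha hb))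
        (transfer_mem_Icc hab hv) (sum_transfer.trans hsum) rfl
    obtain ⟨c₁, c₂, hc₁, hc₂, hc, hv⟩ := exists_eq_transfer_combination hba.symm ha hb
    rw [hv]
    exact convex_isKSubsetCombination k D (htransfer a b hba.symm ha hb)
      (htransfer b a hba hb ha) hc₁ hc₂ hc
  · refine isKSubsetCombination_of_forall_eq_zero_or_eq hD (fun l => ?_) hsum
    have hl : l ∉ fractionalSet D v := hempty ▸ notMem_empty l
    simp only [fractionalSet, mem_filter, mem_univ, true_and, not_and, not_lt] at hl
    rcases (hv l).1.eq_or_lt with h | h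
    · exact .inl h.symm
    · exact .inr ((hv l).2.antisymm (hl h))

theorem exists_isKSubsetCombination_le {k : ℕ} (hD : 0 ≤ D) {u : ι → ℝ}
    (hu : ∀ l, u l ∈ Set.Icc 0 D) (hsum : k * D ≤ ∑ l, u l) :
    ∃ v ≤ u, IsKSubsetCombination k D v := by
  have hU : 0 ≤ ∑ l, u l := sum_nonneg fun l _ => (hu l).1
  set ρ := k * D / ∑ l, u l
  have hρ : ρ ∈ Set.Icc 0 1 := ⟨by positivity, div_le_one_of_le₀ hsum hU⟩
  refine ⟨ρ • u, fun l => mul_le_of_le_one_left (hu l).1 hρ.2,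
    isKSubsetCombination_of_mem_Icc hD (fun l => ⟨?_, ?_⟩) ?_⟩
  · exact mul_nonneg hρ.1 (hu l).1
  · exact (mul_le_of_le_one_left (hu l).1 hρ.2).trans (hu l).2
  · rcases hU.eq_or_lt with h | h
    · have : (k : ℝ) * D = 0 := le_antisymm (h ▸ hsum) (by positivity)
      simp [ρ, ← h, this]
    · simp only [Pi.smul_apply, smul_eq_mul, ← mul_sum, ρ]
      field_simp

end KSubsetCombination

section RecoverySet

variable {F : Type*} [Field F] {k n : ℕ} {G : Matrix (Fin k) (Fin n) F} {j : Fin k}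
  {R : Finset (Fin n)}

theorem single_notMem_span_empty :
    (Pi.single j 1 : Fin k → F) ∉
      Submodule.span F (Gᵀ '' ((∅ : Finset (Fin n)) : Set (Fin n))) := by
  rw [coe_empty, Set.image_empty (f := (Gᵀ : Fin n → Fin k → F)), Submodule.span_empty,
    Submodule.mem_bot]
  exact one_ne_zero ∘ Pi.single_eq_zero_iff.mp

theorem IsRecoverySet.nonempty (hR : IsRecoverySet G j R) : R.Nonempty := by
  rw [nonempty_iff_ne_empty]
  rintro rfl
  exact single_notMem_span_empty hR.1

theorem isRecoverySet_singleton {l : Fin n} (hl : Gᵀ l = Pi.single j 1) :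
    IsRecoverySet G j {l} := by
  refine ⟨Submodule.subset_span ⟨l, by simp, hl⟩, fun S hS => ?_⟩
  rw [ssubset_singleton_iff.mp hS]
  exact single_notMem_span_empty

end RecoverySet

theorem image_transpose_submatrix {α ι κ : Type*} {m : ℕ} [DecidableEq ι]
    (M : Matrix (Fin m) ι α) (c : κ → ι) (R : Finset κ) :
    (M.submatrix id c)ᵀ '' R = Mᵀ '' (R.image c : Set ι) := by
  rw [coe_image, Set.image_image (g := (Mᵀ : ι → Fin m → α))]
  rfl

section MDS

variable {F ι : Type*} [Field F] {k : ℕ}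

def IsMDS (M : Matrix (Fin k) ι F) : Prop :=
  ∀ S : Finset ι, #S = k → LinearIndepOn F Mᵀ (S : Set ι)

variable {M : Matrix (Fin k) ι F}

theorem IsMDS.span_eq_top (hM : IsMDS M) {S : Finset ι} (hS : #S = k) :
    Submodule.span F (Mᵀ '' S) = ⊤ := by
  have := (hM S hS).span_eq_top_of_card_eq_finrank' (by simpa using hS)
  rwa [Set.image_eq_range (f := (Mᵀ : ι → Fin k → F))]

variable [Fintype ι]

theorem IsMDS.linearIndepOn (hM : IsMDS M) (hk : k ≤ Fintype.card ι) {S : Finset ι}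
    (hS : #S ≤ k) : LinearIndepOn F Mᵀ (S : Set ι) := by
  obtain ⟨T, hST, -, hT⟩ := exists_subsuperset_card_eq (subset_univ S) hS (by simpa using hk)
  exact (hM T hT).mono (by simpa using hST)

variable [DecidableEq ι]

theorem IsMDS.notMem_span (hM : IsMDS M) (hk : k ≤ Fintype.card ι) {S : Finset ι} {m : ι}
    (hm : m ∉ S) (hS : #S < k) : Mᵀ m ∉ Submodule.span F (Mᵀ '' S) := by
  have := hM.linearIndepOn hk (S := insert m S) (by rw [card_insert_of_notMem hm]; omega)
  rw [coe_insert] at this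
  exact (this.mono (Set.subset_insert _ _)).notMem_span_iff.mpr ⟨this, hm⟩

variable {n : ℕ} {c : Fin n → ι} {j : Fin k} {R : Finset (Fin n)} {m : ι}

theorem IsMDS.isRecoverySet_submatrix (hM : IsMDS M) (hk : k ≤ Fintype.card ι)
    (hc : Function.Injective c) (hm : Mᵀ m = Pi.single j 1) (hmR : m ∉ R.image c)
    (hR : #R = k) : IsRecoverySet (M.submatrix id c) j R := by
  refine ⟨?_, fun S hS => ?_⟩
  · rw [image_transpose_submatrix, hM.span_eq_top (by rwa [card_image_of_injective _ hc])]
    exact Submodule.mem_top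
  · rw [image_transpose_submatrix, ← hm]
    refine hM.notMem_span hk (fun h => hmR (image_subset_image hS.1 h)) ?_
    exact card_image_le.trans_lt (hR ▸ card_lt_card hS)

theorem IsMDS.le_card_of_isRecoverySet_submatrix (hM : IsMDS M) (hk : k ≤ Fintype.card ι)
    (hm : Mᵀ m = Pi.single j 1) (hmR : m ∉ R.image c)
    (hR : IsRecoverySet (M.submatrix id c) j R) : k ≤ #R := by
  by_contra! h
  have := hR.1
  rw [image_transpose_submatrix, ← hm] at this
  exact hM.notMem_span hk hmR (card_image_le.trans_lt h) this

end MDS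

section Gmat

def gmatCol (k i : ℕ) {n : ℕ} (l : Fin n) : Fin (k + n) :=
  if (l : ℕ) < i then Fin.castLE (Nat.le_add_left n k) l else Fin.natAdd k l

variable {F : Type*} [Field F] {k n i : ℕ} {M : Matrix (Fin k) (Fin (k + n)) F}
  {j : Fin k} {R : Finset (Fin n)}

def IsSystematic (M : Matrix (Fin k) (Fin (k + n)) F) : Prop :=
  ∀ j r : Fin k, M r (Fin.castAdd n j) = if r = j then 1 else 0

theorem Gmat_eq_submatrix (M : Matrix (Fin k) (Fin (k + n)) F) (i : ℕ) :
    Gmat M i = M.submatrix id (gmatCol k i) := by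
  ext r l
  simp only [Gmat, gmatCol, Matrix.of_apply, Matrix.submatrix_apply, id]
  split_ifs <;> rfl

theorem gmatCol_injective : Function.Injective (gmatCol k i (n := n)) := by
  intro l l' h
  simp only [gmatCol, Fin.ext_iff] at h
  split_ifs at h <;> simp at h <;> omega

theorem gmatCol_castLE (hkn : k ≤ n) (hj : (j : ℕ) < i) :
    gmatCol k i (Fin.castLE hkn j) = Fin.castAdd n j := by
  simp [gmatCol, hj, Fin.ext_iff]

theorem castAdd_notMem_image_gmatCol (hkn : k ≤ n) (h : (j : ℕ) < i → Fin.castLE hkn j ∉ R) :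
    Fin.castAdd n j ∉ R.image (gmatCol k i) := by
  simp only [mem_image, not_exists, not_and]
  intro l hl hlj
  have hval : (l : ℕ) < i ∧ (l : ℕ) = j := by
    simp only [gmatCol, Fin.ext_iff] at hlj
    split_ifs at hlj <;> simp at hlj <;> omega
  exact h (hval.2 ▸ hval.1) (by rwa [show Fin.castLE hkn j = l from Fin.ext hval.2.symm])

theorem IsSystematic.transpose_castAdd (hsys : IsSystematic M) :
    Mᵀ (Fin.castAdd n j) = Pi.single j 1 := by
  ext r
  simp [hsys j r, Pi.single_apply]

theorem isRecoverySet_Gmat_singleton (hsys : IsSystematic M) (hkn : k ≤ n)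
    (hj : (j : ℕ) < i) : IsRecoverySet (Gmat M i) j {Fin.castLE hkn j} := by
  refine isRecoverySet_singleton ?_
  rw [Gmat_eq_submatrix]
  change Mᵀ (gmatCol k i (Fin.castLE hkn j)) = _
  rw [gmatCol_castLE hkn hj, hsys.transpose_castAdd]

theorem isRecoverySet_Gmat (hsys : IsSystematic M) (hM : IsMDS M) (hkn : k ≤ n)
    (hR : #R = k) (h : (j : ℕ) < i → Fin.castLE hkn j ∉ R) : IsRecoverySet (Gmat M i) j R := by
  rw [Gmat_eq_submatrix]
  exact hM.isRecoverySet_submatrix (by simp) gmatCol_injective hsys.transpose_castAdd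
    (castAdd_notMem_image_gmatCol hkn h) hR

theorem le_card_of_isRecoverySet_Gmat (hsys : IsSystematic M) (hM : IsMDS M)
    (hkn : k ≤ n) (hR : IsRecoverySet (Gmat M i) j R) (h : (j : ℕ) < i → Fin.castLE hkn j ∉ R) :
    k ≤ #R := by
  rw [Gmat_eq_submatrix] at hR
  exact hM.le_card_of_isRecoverySet_submatrix (by simp) hsys.transpose_castAdd
    (castAdd_notMem_image_gmatCol hkn h) hR

end Gmat

section Necessity

variable {k n i : ℕ} {A : Finset (Fin k)}

theorem sum_sum_mul_eq_sum_mul_sum (y : Fin n → ℝ) (W : Finset (Fin n) → ℝ) :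
    ∑ R, (∑ l ∈ R, y l) * W R = ∑ l, y l * ∑ R with l ∈ R, W R := by
  simp only [sum_mul, mul_sum, sum_filter, mul_ite, mul_zero]
  rw [sum_comm]
  simp

theorem IsValidAllocation.sum_mul_le {F : Type*} [Field F] {G : Matrix (Fin k) (Fin n) F}
    {lam : Fin k → ℝ} {w : Fin k → Finset (Fin n) → ℝ} (hw : IsValidAllocation G lam w)
    {p : Fin k → ℝ} {y : Fin n → ℝ} (hy : ∀ l, 0 ≤ y l)
    (hcost : ∀ j R, IsRecoverySet G j R → p j ≤ ∑ l ∈ R, y l) :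
    ∑ j, p j * lam j ≤ ∑ l, y l := by
  obtain ⟨hw0, hwrec, hwsum, hwload⟩ := hw
  have hterm (j : Fin k) (R : Finset (Fin n)) : p j * w j R ≤ (∑ l ∈ R, y l) * w j R := by
    by_cases hR : IsRecoverySet G j R
    · exact mul_le_mul_of_nonneg_right (hcost j R hR) (hw0 j R)
    · simp [hwrec j R hR]
  calc ∑ j, p j * lam j = ∑ j, ∑ R, p j * w j R := by simp only [← hwsum, mul_sum]
    _ ≤ ∑ j, ∑ R, (∑ l ∈ R, y l) * w j R := sum_le_sum fun j _ => sum_le_sum fun R _ => hterm j R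
    _ = ∑ l, y l * ∑ j, ∑ R with l ∈ R, w j R := by
      simp only [sum_sum_mul_eq_sum_mul_sum, mul_sum]
      exact sum_comm
    _ ≤ ∑ l, y l * 1 := sum_le_sum fun l _ => mul_le_mul_of_nonneg_left (hwload l) (hy l)
    _ = ∑ l, y l := by simp only [mul_one]

def dualPrice (i : ℕ) (A : Finset (Fin k)) (j : Fin k) : ℝ :=
  if j ∈ A ∨ i ≤ (j : ℕ) then k else 1

def dualWeight (hkn : k ≤ n) (A : Finset (Fin k)) (l : Fin n) : ℝ :=
  if l ∈ A.map (Fin.castLEEmb hkn) then k else 1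

theorem sum_dualWeight (hkn : k ≤ n) (A : Finset (Fin k)) :
    ∑ l, dualWeight hkn A l = n + #A * ((k : ℝ) - 1) := by
  have h (l : Fin n) : dualWeight hkn A l =
      1 + if l ∈ A.map (Fin.castLEEmb hkn) then (k : ℝ) - 1 else 0 := by
    unfold dualWeight; split_ifs <;> ring
  simp only [h, sum_add_distrib, sum_ite_mem, univ_inter, sum_const, card_map, card_univ,
    Fintype.card_fin, nsmul_eq_mul, mul_one]

theorem sum_dualPrice_mul (hA : ∀ j ∈ A, (j : ℕ) < i) (lam : Fin k → ℝ) :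
    ∑ j, dualPrice i A j * lam j =
      (k : ℝ) * ((∑ j ∈ A, lam j) + ∑ j ∈ univ.filter (fun j : Fin k => i ≤ (j : ℕ)), lam j) +
        ∑ j ∈ univ.filter (fun j : Fin k => (j : ℕ) < i ∧ j ∉ A), lam j := by
  rw [← Fintype.sum_ite_mem A lam, sum_filter, sum_filter, mul_add, mul_sum, mul_sum,
    ← sum_add_distrib, ← sum_add_distrib]
  refine sum_congr rfl fun j _ => ?_
  have := hA j
  unfold dualPrice
  split_ifs <;> grind

variable {F : Type*} [Field F] {M : Matrix (Fin k) (Fin (k + n)) F}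

theorem dualPrice_le_sum_dualWeight (hsys : IsSystematic M) (hM : IsMDS M)
    (hkn : k ≤ n) {j : Fin k} {R : Finset (Fin n)} (hR : IsRecoverySet (Gmat M i) j R) :
    dualPrice i A j ≤ ∑ l ∈ R, dualWeight hkn A l := by
  have hk : (1 : ℝ) ≤ k := by exact_mod_cast j.pos
  have hy (l : Fin n) : 1 ≤ dualWeight hkn A l := by unfold dualWeight; split_ifs <;> linarith
  have hcard : (#R : ℝ) ≤ ∑ l ∈ R, dualWeight hkn A l := by
    simpa using card_nsmul_le_sum R _ 1 fun l _ => hy l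
  unfold dualPrice
  split_ifs with hj
  · by_cases hjR : (j : ℕ) < i ∧ Fin.castLE hkn j ∈ R
    · calc (k : ℝ) = dualWeight hkn A (Fin.castLE hkn j) := by
            simp [dualWeight, hj.resolve_right (not_le.mpr hjR.1)]
        _ ≤ ∑ l ∈ R, dualWeight hkn A l :=
            single_le_sum (fun l _ => zero_le_one.trans (hy l)) hjR.2
    · calc (k : ℝ) ≤ #R := by
            exact_mod_cast le_card_of_isRecoverySet_Gmat hsys hM hkn hR fun h h' => hjR ⟨h, h'⟩
        _ ≤ _ := hcard
  · calc (1 : ℝ) ≤ #R := by exact_mod_cast hR.nonempty.card_pos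
      _ ≤ _ := hcard

theorem le_of_isValidAllocation_Gmat (hsys : IsSystematic M) (hM : IsMDS M)
    (hkn : k ≤ n) {lam : Fin k → ℝ} {w : Fin k → Finset (Fin n) → ℝ}
    (hw : IsValidAllocation (Gmat M i) lam w) (hA : ∀ j ∈ A, (j : ℕ) < i) :
    (k : ℝ) * ((∑ j ∈ A, lam j) + ∑ j ∈ univ.filter (fun j : Fin k => i ≤ (j : ℕ)), lam j) +
      ∑ j ∈ univ.filter (fun j : Fin k => (j : ℕ) < i ∧ j ∉ A), lam j ≤ n + #A * ((k : ℝ) - 1) := by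
  rw [← sum_dualPrice_mul hA, ← sum_dualWeight hkn A]
  refine hw.sum_mul_le (fun l => ?_) fun j R hR => dualPrice_le_sum_dualWeight hsys hM hkn hR
  unfold dualWeight
  positivity

end Necessity

theorem card_filter_le_val {n : ℕ} (i : ℕ) : #{l : Fin n | i ≤ (l : ℕ)} = n - i := by
  have h := card_filter_add_card_filter_not (s := univ) (p := fun l : Fin n => (l : ℕ) < i)
  simp only [Fin.card_filter_val_lt, not_lt, card_univ, Fintype.card_fin] at h
  omega

theorem sum_mul_div_sum {ι : Type*} [Fintype ι] {r : ι → ℝ} (hr : ∀ j, 0 ≤ r j) (j : ι) :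
    (∑ j, r j) * (r j / ∑ j, r j) = r j := by
  rcases (sum_nonneg fun j _ => hr j).eq_or_lt with h | h
  · rw [← h, (sum_eq_zero_iff_of_nonneg fun j _ => hr j).mp h.symm j (mem_univ j)]
    simp
  · field_simp

section Sufficiency

variable {k n : ℕ} (hkn : k ≤ n) (i : ℕ) (lam : Fin k → ℝ)

/-- The part of the demand for object `j` served by its systematic column. -/
def directRate (j : Fin k) : ℝ :=
  if (j : ℕ) < i then min (lam j) 1 else 0

def residualRate (j : Fin k) : ℝ :=
  lam j - directRate i lam j

def directAlloc (j : Fin k) (R : Finset (Fin n)) : ℝ :=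
  if R = {Fin.castLE hkn j} then directRate i lam j else 0

def directLoad (l : Fin n) : ℝ :=
  ∑ j, if Fin.castLE hkn j = l then directRate i lam j else 0

def spareCapacity (l : Fin n) : ℝ :=
  min (1 - directLoad hkn i lam l) (∑ j, residualRate i lam j)

noncomputable def saturatedSet : Finset (Fin k) :=
  {j | (j : ℕ) < i ∧ 1 < lam j}

variable {hkn i lam}

theorem directRate_mem_Icc (hlam : ∀ j, 0 ≤ lam j) (j : Fin k) :
    directRate i lam j ∈ Set.Icc 0 (min (lam j) 1) := by
  have := hlam j
  unfold directRate
  split_ifs <;> constructor <;> simp [*]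

theorem residualRate_nonneg (hlam : ∀ j, 0 ≤ lam j) (j : Fin k) : 0 ≤ residualRate i lam j :=
  sub_nonneg.mpr ((directRate_mem_Icc hlam j).2.trans (min_le_left _ _))

theorem directAlloc_nonneg (hlam : ∀ j, 0 ≤ lam j) (j : Fin k) (R : Finset (Fin n)) :
    0 ≤ directAlloc hkn i lam j R := by
  unfold directAlloc
  split_ifs
  exacts [(directRate_mem_Icc hlam j).1, le_rfl]

theorem sum_directAlloc (j : Fin k) : ∑ R, directAlloc hkn i lam j R = directRate i lam j := by
  simp [directAlloc]

theorem sum_sum_filter_directAlloc (l : Fin n) :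
    ∑ j, ∑ R with l ∈ R, directAlloc hkn i lam j R = directLoad hkn i lam l := by
  refine sum_congr rfl fun j _ => ?_
  simp [directAlloc, eq_comm]

theorem directLoad_castLE (j : Fin k) :
    directLoad hkn i lam (Fin.castLE hkn j) = directRate i lam j := by
  simp [directLoad, Fin.castLE_inj]

theorem directLoad_mem_Icc (hlam : ∀ j, 0 ≤ lam j) (l : Fin n) :
    directLoad hkn i lam l ∈ Set.Icc 0 1 := by
  by_cases hl : ∃ j, Fin.castLE hkn j = l
  · obtain ⟨j, rfl⟩ := hl
    rw [directLoad_castLE]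
    have := directRate_mem_Icc (i := i) hlam j
    exact ⟨this.1, this.2.trans (min_le_right _ _)⟩
  · simp only [not_exists] at hl
    simp [directLoad, hl]

theorem directLoad_eq_zero {l : Fin n} (hl : i ≤ (l : ℕ)) : directLoad hkn i lam l = 0 := by
  refine sum_eq_zero fun j _ => ?_
  split_ifs with h
  · subst h
    simp [directRate, show ¬ (j : ℕ) < i from by simpa using hl]
  · rfl

theorem sum_directLoad : ∑ l, directLoad hkn i lam l = ∑ j, directRate i lam j := by
  unfold directLoad
  rw [sum_comm]
  simp

theorem spareCapacity_mem_Icc (hlam : ∀ j, 0 ≤ lam j) (l : Fin n) :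
    spareCapacity hkn i lam l ∈ Set.Icc 0 (∑ j, residualRate i lam j) :=
  ⟨le_min (by linarith [(directLoad_mem_Icc (hkn := hkn) (i := i) hlam l).2])
    (sum_nonneg fun j _ => residualRate_nonneg hlam j), min_le_right _ _⟩

theorem mul_residualRate_add_directRate (hlam : ∀ j, 0 ≤ lam j) (j : Fin k) :
    k * residualRate i lam j + directRate i lam j =
      dualPrice i (saturatedSet i lam) j * lam j -
        if j ∈ saturatedSet i lam then (k : ℝ) - 1 else 0 := by
  have := hlam j
  simp only [residualRate, directRate, dualPrice, saturatedSet, mem_filter, mem_univ, true_and]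
  split_ifs <;> grind

theorem mul_sum_residualRate_le_sum_spareCapacity (hn : k + i ≤ n) (hlam : ∀ j, 0 ≤ lam j)
    (hcut : ∀ A : Finset (Fin k), (∀ j ∈ A, (j : ℕ) < i) →
      (k : ℝ) * ((∑ j ∈ A, lam j) + ∑ j ∈ univ.filter (fun j : Fin k => i ≤ (j : ℕ)), lam j) +
        ∑ j ∈ univ.filter (fun j : Fin k => (j : ℕ) < i ∧ j ∉ A), lam j ≤ n + #A * ((k : ℝ) - 1)) :
    k * ∑ j, residualRate i lam j ≤ ∑ l, spareCapacity hkn i lam l := by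
  set D := ∑ j, residualRate i lam j
  have hD0 : 0 ≤ D := sum_nonneg fun j _ => residualRate_nonneg hlam j
  rcases le_or_gt 1 D with hD | hD
  · set A := saturatedSet i lam
    have hA : ∀ j ∈ A, (j : ℕ) < i := fun j hj => (mem_filter.mp hj).2.1
    have hcutA := hcut A hA
    rw [← sum_dualPrice_mul hA] at hcutA
    have hspare (l : Fin n) : spareCapacity hkn i lam l = 1 - directLoad hkn i lam l :=
      min_eq_left (by linarith [(directLoad_mem_Icc (hkn := hkn) (i := i) hlam l).1])
    have hcard : (#A : ℝ) * (k - 1) = ∑ j, if j ∈ A then (k : ℝ) - 1 else 0 := by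
      rw [Fintype.sum_ite_mem, sum_const, nsmul_eq_mul]
    have hsum : k * D + ∑ j, directRate i lam j =
        ∑ j, dualPrice i A j * lam j - #A * ((k : ℝ) - 1) := by
      rw [hcard, ← sum_sub_distrib, mul_sum, ← sum_add_distrib]
      exact sum_congr rfl fun j _ => mul_residualRate_add_directRate hlam j
    simp only [hspare, sum_sub_distrib, sum_directLoad, sum_const, card_univ, Fintype.card_fin,
      nsmul_eq_mul, mul_one]
    linarith
  · have hspareD (l : Fin n) (hl : l ∈ univ.filter fun l : Fin n => i ≤ (l : ℕ)) :
        spareCapacity hkn i lam l = D := by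
      rw [spareCapacity, directLoad_eq_zero (mem_filter.mp hl).2, sub_zero]
      exact min_eq_right hD.le
    calc k * D ≤ #{l : Fin n | i ≤ (l : ℕ)} * D := by
          gcongr
          rw [card_filter_le_val]
          exact_mod_cast (by omega : k ≤ n - i)
      _ = ∑ l ∈ univ.filter fun l : Fin n => i ≤ (l : ℕ), spareCapacity hkn i lam l := by
          rw [sum_congr rfl hspareD, sum_const, nsmul_eq_mul]
      _ ≤ ∑ l, spareCapacity hkn i lam l :=
          sum_le_sum_of_subset_of_nonneg (subset_univ _) fun l _ _ =>
            (spareCapacity_mem_Icc hlam l).1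

variable {F : Type*} [Field F] {M : Matrix (Fin k) (Fin (k + n)) F} {j : Fin k}
  {R : Finset (Fin n)}

theorem isRecoverySet_of_directAlloc_ne_zero (hsys : IsSystematic M)
    (h : directAlloc hkn i lam j R ≠ 0) : IsRecoverySet (Gmat M i) j R := by
  unfold directAlloc at h
  split_ifs at h with hR
  · subst hR
    refine isRecoverySet_Gmat_singleton hsys hkn ?_
    by_contra hj
    simp [directRate, hj] at h
  · exact absurd rfl h

theorem isRecoverySet_of_residualRate_ne_zero (hsys : IsSystematic M) (hM : IsMDS M)
    {W : Finset (Fin n) → ℝ} (hW0 : ∀ R, 0 ≤ W R) (hWk : ∀ R, W R ≠ 0 → #R = k)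
    (hWload : ∀ l, ∑ R with l ∈ R, W R ≤ spareCapacity hkn i lam l) (hR : W R ≠ 0)
    (hj : residualRate i lam j ≠ 0) : IsRecoverySet (Gmat M i) j R := by
  refine isRecoverySet_Gmat hsys hM hkn (hWk R hR) fun hji hjR => ?_
  have hlam : 1 < lam j := by
    by_contra! h
    simp [residualRate, directRate, hji, h] at hj
  have hspare : spareCapacity hkn i lam (Fin.castLE hkn j) ≤ 0 := by
    rw [spareCapacity, directLoad_castLE]
    simp [directRate, hji, hlam.le]
  have hpos : 0 < ∑ R with Fin.castLE hkn j ∈ R, W R :=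
    (lt_of_le_of_ne (hW0 R) (Ne.symm hR)).trans_le
      (single_le_sum (fun R _ => hW0 R) (mem_filter.mpr ⟨mem_univ R, hjR⟩))
  linarith [hWload (Fin.castLE hkn j)]

theorem mem_serviceRegion_Gmat (hsys : IsSystematic M) (hM : IsMDS M) (hkn : k ≤ n)
    (hn : k + i ≤ n) (hlam : ∀ j, 0 ≤ lam j)
    (hcut : ∀ A : Finset (Fin k), (∀ j ∈ A, (j : ℕ) < i) →
      (k : ℝ) * ((∑ j ∈ A, lam j) + ∑ j ∈ univ.filter (fun j : Fin k => i ≤ (j : ℕ)), lam j) +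
        ∑ j ∈ univ.filter (fun j : Fin k => (j : ℕ) < i ∧ j ∉ A), lam j ≤ n + #A * ((k : ℝ) - 1)) :
    lam ∈ ServiceRegion (Gmat M i) := by
  set D := ∑ j, residualRate i lam j
  have hD0 : 0 ≤ D := sum_nonneg fun j _ => residualRate_nonneg hlam j
  obtain ⟨v, hvu, W, hW0, hWk, hWD, hWv⟩ := exists_isKSubsetCombination_le hD0
    (spareCapacity_mem_Icc (hkn := hkn) hlam)
    (mul_sum_residualRate_le_sum_spareCapacity hn hlam hcut)
  have hshares : ∑ j, residualRate i lam j / D ≤ 1 := by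
    rw [← sum_div]
    exact div_self_le_one D
  refine ⟨hlam, fun j R => directAlloc hkn i lam j R + W R * (residualRate i lam j / D),
    fun j R => ?_, fun j R hR => ?_, fun j => ?_, fun l => ?_⟩
  · exact add_nonneg (directAlloc_nonneg hlam j R)
      (mul_nonneg (hW0 R) (div_nonneg (residualRate_nonneg hlam j) hD0))
  · have h₁ : directAlloc hkn i lam j R = 0 := by
      by_contra h
      exact hR (isRecoverySet_of_directAlloc_ne_zero hsys h)
    have h₂ : W R * (residualRate i lam j / D) = 0 := by
      by_contra h
      obtain ⟨hW, hd⟩ := mul_ne_zero_iff.mp h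
      exact hR (isRecoverySet_of_residualRate_ne_zero hsys hM hW0 hWk
        (fun l => (hWv l).symm ▸ hvu l) hW (div_ne_zero_iff.mp hd).1)
    dsimp only
    rw [h₁, h₂, add_zero]
  · rw [sum_add_distrib, sum_directAlloc, ← sum_mul, hWD,
      sum_mul_div_sum (residualRate_nonneg hlam), residualRate]
    ring
  · have hv0 : 0 ≤ v l := hWv l ▸ sum_nonneg fun R _ => hW0 R
    calc ∑ j, ∑ R with l ∈ R, (directAlloc hkn i lam j R + W R * (residualRate i lam j / D))
        = directLoad hkn i lam l + v l * ∑ j, residualRate i lam j / D := by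
          simp only [sum_add_distrib, ← sum_mul, hWv, mul_sum, sum_sum_filter_directAlloc]
      _ ≤ directLoad hkn i lam l + spareCapacity hkn i lam l := by
          gcongr
          exact (mul_le_of_le_one_right hv0 hshares).trans (hvu l)
      _ ≤ 1 := by
          have : spareCapacity hkn i lam l ≤ 1 - directLoad hkn i lam l := min_le_left _ _
          linarith

end Sufficiency

theorem srr_characterization_of_large_n_general
    {F : Type*} [Field F] {k n : ℕ} (hkn : k ≤ n)
    (M : Matrix (Fin k) (Fin (k + n)) F)
    (hsys : ∀ j : Fin k, ∀ r : Fin k, M r (Fin.castAdd n j) = if r = j then (1 : F) else 0)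
    (hMDS : ∀ S : Finset (Fin (k + n)), S.card = k →
      LinearIndependent F (fun l : S => Mᵀ (l : Fin (k + n))))
    (i : ℕ) (hn : k + i ≤ n)
    (lam : Fin k → ℝ) (hlam0 : ∀ j, 0 ≤ lam j) :
    lam ∈ ServiceRegion (Gmat M i : Matrix (Fin k) (Fin n) F) ↔
      ∀ A : Finset (Fin k), (∀ j ∈ A, (j : ℕ) < i) →
        (k : ℝ) * ((∑ j ∈ A, lam j) +
        ∑ j ∈ Finset.univ.filter (fun j : Fin k => i ≤ (j : ℕ)), lam j) +
      ∑ j ∈ Finset.univ.filter (fun j : Fin k => (j : ℕ) < i ∧ j ∉ A), lam j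
          ≤ (n : ℝ) + (A.card : ℝ) * ((k : ℝ) - 1) :=
  ⟨fun ⟨_, _, hw⟩ _ hA => le_of_isValidAllocation_Gmat hsys hMDS hkn hw hA,
    mem_serviceRegion_Gmat hsys hMDS hkn hn hlam0⟩

theorem srr_characterization_of_large_n
    {F : Type*} [Field F] [Fintype F] {k n : ℕ} (hk : 2 ≤ k) (hkn : k ≤ n)
    (hq : k + n + 1 ≤ Fintype.card F)
    (M : Matrix (Fin k) (Fin (k + n)) F)
    (hsys : ∀ j : Fin k, ∀ r : Fin k, M r (Fin.castAdd n j) = if r = j then (1 : F) else 0)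
    (hMDS : ∀ S : Finset (Fin (k + n)), S.card = k →
      LinearIndependent F (fun l : S => Mᵀ (l : Fin (k + n))))
    (i : ℕ) (hik : i ≤ k) (hn : k + i ≤ n)
    (lam : Fin k → ℝ) (hlam0 : ∀ j, 0 ≤ lam j) :
    lam ∈ ServiceRegion (Gmat M i : Matrix (Fin k) (Fin n) F) ↔
      ∀ A : Finset (Fin k), (∀ j ∈ A, (j : ℕ) < i) →
        (k : ℝ) * ((∑ j ∈ A, lam j) +
        ∑ j ∈ Finset.univ.filter (fun j : Fin k => i ≤ (j : ℕ)), lam j) +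
      ∑ j ∈ Finset.univ.filter (fun j : Fin k => (j : ℕ) < i ∧ j ∉ A), lam j
          ≤ (n : ℝ) + (A.card : ℝ) * ((k : ℝ) - 1) :=
  srr_characterization_of_large_n_general hkn M hsys hMDS i hn lam hlam0
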